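/- arXiv:math/0610366 — 3 statements merged into one kernel-verified Lean document; each statement's English description precedes it below -/
import Mathlib

section
/- Let p > 1 and k ≥ 1. For every z ∈ ℝ^k and every real t > 0 one has |V_p(tz)| ≤ max{t, t^{p/2}} · |V_p(z)|. -/
/-! On positive reals `x ↦ x ^ r` is monotone or antitone, so on an interval it is bounded by its
values at the endpoints. As `1 + ‖t • z‖²` lies between `1 + ‖z‖²` and `t² (1 + ‖z‖²)`, this bounds
`(1 + ‖t • z‖²) ^ ((p - 2) / 4)` by `max 1 (t ^ ((p - 2) / 2)) * (1 + ‖z‖²) ^ ((p - 2) / 4)`, and the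
remaining factor `‖t • z‖ = t ‖z‖` turns `max 1 (t ^ ((p - 2) / 2))` into `max t (t ^ (p / 2))`. -/

noncomputable def Vp (p : ℝ) {E : Type*} [NormedAddCommGroup E] [NormedSpace ℝ E] (z : E) : E :=
  ((1 + ‖z‖ ^ 2) ^ ((p - 2) / 4)) • z

lemma Real.rpow_le_max_of_mem_uIcc {a b x : ℝ} (ha : 0 < a) (hb : 0 < b) (hx : x ∈ Set.uIcc a b)
    (r : ℝ) : x ^ r ≤ max (a ^ r) (b ^ r) := by
  have hx₀ : 0 < x := (lt_min ha hb).trans_le hx.1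
  rcases le_total 0 r with hr | hr
  · rcases max_choice a b with h | h
    · exact le_max_of_le_left (Real.rpow_le_rpow hx₀.le (h ▸ hx.2) hr)
    · exact le_max_of_le_right (Real.rpow_le_rpow hx₀.le (h ▸ hx.2) hr)
  · rcases min_choice a b with h | h
    · exact le_max_of_le_left (Real.rpow_le_rpow_of_nonpos ha (h ▸ hx.1) hr)
    · exact le_max_of_le_right (Real.rpow_le_rpow_of_nonpos hb (h ▸ hx.1) hr)

lemma one_add_mul_sq_mem_uIcc (t s : ℝ) :
    1 + (t * s) ^ 2 ∈ Set.uIcc (1 + s ^ 2) (t ^ 2 * (1 + s ^ 2)) := by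
  rcases le_total 1 (t ^ 2) with ht | ht
  · exact Set.mem_uIcc_of_le (by nlinarith [sq_nonneg s]) (by nlinarith)
  · exact Set.mem_uIcc_of_ge (by nlinarith) (by nlinarith [sq_nonneg s])

lemma norm_Vp {E : Type*} [NormedAddCommGroup E] [NormedSpace ℝ E] (p : ℝ) (z : E) :
    ‖Vp p z‖ = (1 + ‖z‖ ^ 2) ^ ((p - 2) / 4) * ‖z‖ := by
  rw [Vp, norm_smul, Real.norm_of_nonneg (by positivity)]

lemma norm_Vp_smul_le {E : Type*} [NormedAddCommGroup E] [NormedSpace ℝ E] (p : ℝ) (z : E)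
    {t : ℝ} (ht : 0 < t) : ‖Vp p (t • z)‖ ≤ max t (t ^ (p / 2)) * ‖Vp p z‖ := by
  set r := (p - 2) / 4
  set A := (1 + ‖z‖ ^ 2) ^ r
  have hA : 0 < 1 + ‖z‖ ^ 2 := by positivity
  have ht_pow : t ^ (p / 2) = (t ^ 2) ^ r * t := by
    rw [← Real.rpow_natCast, ← Real.rpow_mul ht.le, ← Real.rpow_add_one ht.ne']
    congr 1
    push_cast
    ring
  have hfactor : (1 + ‖t • z‖ ^ 2) ^ r ≤ max A ((t ^ 2) ^ r * A) := by
    rw [← Real.mul_rpow (by positivity) hA.le, norm_smul, Real.norm_of_nonneg ht.le]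
    exact Real.rpow_le_max_of_mem_uIcc hA (by positivity) (one_add_mul_sq_mem_uIcc t ‖z‖) r
  calc ‖Vp p (t • z)‖ = (1 + ‖t • z‖ ^ 2) ^ r * ‖z‖ * t := by
        rw [norm_Vp, norm_smul, Real.norm_of_nonneg ht.le]; ring
    _ ≤ max A ((t ^ 2) ^ r * A) * ‖z‖ * t := by gcongr
    _ = max t ((t ^ 2) ^ r * t) * (A * ‖z‖) := by
        rw [max_mul_of_nonneg _ _ (norm_nonneg z), max_mul_of_nonneg _ _ ht.le,
          max_mul_of_nonneg _ _ (by positivity)]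
        congr 1 <;> ring
    _ = max t (t ^ (p / 2)) * ‖Vp p z‖ := by rw [norm_Vp, ht_pow]

theorem stmt_0_general (k : ℕ) (p : ℝ)
    (z : EuclideanSpace ℝ (Fin k)) (t : ℝ) (ht : 0 < t) :
    ‖Vp p (t • z)‖ ≤ max t (t ^ (p / 2)) * ‖Vp p z‖ :=
  norm_Vp_smul_le p z ht

theorem stmt_0 (k : ℕ) (hk : 1 ≤ k) (p : ℝ) (hp : 1 < p)
    (z : EuclideanSpace ℝ (Fin k)) (t : ℝ) (ht : 0 < t) :
    ‖Vp p (t • z)‖ ≤ max t (t ^ (p / 2)) * ‖Vp p z‖ :=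
  stmt_0_general k p z t ht
end

section
/- Let k ≥ 1 and 1 < γ₁ ≤ γ₂ < ∞. There exists a constant c = c(k, γ₁, γ₂) ≥ 1 such that for every p ∈ [γ₁, γ₂] and all z, η ∈ ℝ^k one has c^{-1} |z − η| (1 + |z|² + |η|²)^{(p−2)/4} ≤ |V_p(z) − V_p(η)| ≤ c |z − η| (1 + |z|² + |η|²)^{(p−2)/4}. -/
open Real
open scoped RealInnerProductSpace

def Comparable (C x y : ℝ) : Prop := C⁻¹ * x ≤ y ∧ y ≤ C * x

namespace Comparable

variable {C D r x y z : ℝ}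

theorem trans (hD : 0 ≤ D) (hxy : Comparable C x y) (hyz : Comparable D y z) :
    Comparable (C * D) x z := by
  constructor
  · calc (C * D)⁻¹ * x = D⁻¹ * (C⁻¹ * x) := by rw [mul_inv]; ring
      _ ≤ D⁻¹ * y := mul_le_mul_of_nonneg_left hxy.1 (inv_nonneg.2 hD)
      _ ≤ z := hyz.1
  · calc z ≤ D * y := hyz.2
      _ ≤ D * (C * x) := mul_le_mul_of_nonneg_left hxy.2 hD
      _ = C * D * x := by ring

theorem mono (h : Comparable C x y) (hC : 0 < C) (hCD : C ≤ D) (hx : 0 ≤ x) :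
    Comparable D x y :=
  ⟨(mul_le_mul_of_nonneg_right (inv_anti₀ hC hCD) hx).trans h.1,
    h.2.trans (mul_le_mul_of_nonneg_right hCD hx)⟩

theorem mul_left (h : Comparable C x y) (hr : 0 ≤ r) : Comparable C (r * x) (r * y) :=
  ⟨by linarith [mul_le_mul_of_nonneg_left h.1 hr], by linarith [mul_le_mul_of_nonneg_left h.2 hr]⟩

theorem nonneg (h : Comparable C x y) (hC : 0 ≤ C) (hx : 0 ≤ x) : 0 ≤ y :=
  (mul_nonneg (inv_nonneg.2 hC) hx).trans h.1

end Comparable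

section Collinear

variable {E : Type*} [NormedAddCommGroup E] [InnerProductSpace ℝ E]

/-- Both squared norms are affine in `⟪z, η⟫ ∈ [-‖z‖ * ‖η‖, ‖z‖ * ‖η‖]`, and at the two endpoints
they are the squares of the two sides of `hsub` and `hadd`. -/
theorem norm_smul_sub_smul_le (z η : E) {α β α' β' : ℝ}
    (hsub : |α * ‖z‖ - β * ‖η‖| ≤ |α' * ‖z‖ - β' * ‖η‖|)
    (hadd : |α * ‖z‖ + β * ‖η‖| ≤ |α' * ‖z‖ + β' * ‖η‖|) :
    ‖α • z - β • η‖ ≤ ‖α' • z - β' • η‖ := by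
  have hsq (a b : ℝ) :
      ‖a • z - b • η‖ ^ 2 = a ^ 2 * ‖z‖ ^ 2 - 2 * (a * b) * ⟪z, η⟫ + b ^ 2 * ‖η‖ ^ 2 := by
    rw [norm_sub_sq_real, norm_smul, norm_smul, real_inner_smul_left, real_inner_smul_right,
      Real.norm_eq_abs, Real.norm_eq_abs, mul_pow, mul_pow, sq_abs, sq_abs]
    ring
  have hsub' := sq_le_sq.2 hsub
  have hadd' := sq_le_sq.2 hadd
  obtain ⟨hlo, hhi⟩ := abs_le.1 (abs_real_inner_le_norm z η)
  refine (pow_le_pow_iff_left₀ (norm_nonneg _) (norm_nonneg _) two_ne_zero).1 ?_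
  rw [hsq, hsq]
  rcases le_total (α * β) (α' * β') with h | h
  · nlinarith [mul_nonneg (sub_nonneg.2 h) (sub_nonneg.2 hhi)]
  · nlinarith [mul_nonneg (sub_nonneg.2 h) (neg_le_iff_add_nonneg.1 hlo)]

theorem Comparable.norm_smul_sub_smul {C r α β : ℝ} (z η : E) (hC : 0 < C) (hr : 0 ≤ r)
    (hsub : Comparable C (|‖z‖ - ‖η‖| * r) |α * ‖z‖ - β * ‖η‖|)
    (hadd : Comparable C ((‖z‖ + ‖η‖) * r) (α * ‖z‖ + β * ‖η‖)) :
    Comparable C (‖z - η‖ * r) ‖α • z - β • η‖ := by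
  have hnorm (t : ℝ) (ht : 0 ≤ t) : ‖t • z - t • η‖ = t * ‖z - η‖ := by
    rw [← smul_sub, norm_smul, Real.norm_of_nonneg ht]
  have hsum : 0 ≤ α * ‖z‖ + β * ‖η‖ := hadd.nonneg hC.le (by positivity)
  constructor
  · have h := norm_smul_sub_smul_le z η (α := C⁻¹ * r) (β := C⁻¹ * r) (α' := α) (β' := β) ?_ ?_
    · rwa [hnorm _ (by positivity), mul_assoc, mul_comm r] at h
    · rw [← mul_sub, abs_mul, abs_of_nonneg (by positivity : 0 ≤ C⁻¹ * r)]
      linarith [hsub.1]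
    · rw [← mul_add, abs_of_nonneg (by positivity : 0 ≤ C⁻¹ * r * (‖z‖ + ‖η‖)), abs_of_nonneg hsum]
      linarith [hadd.1]
  · have h := norm_smul_sub_smul_le z η (α := α) (β := β) (α' := C * r) (β' := C * r) ?_ ?_
    · rwa [hnorm _ (by positivity), mul_assoc, mul_comm r] at h
    · rw [← mul_sub, abs_mul, abs_of_nonneg (by positivity : 0 ≤ C * r)]
      linarith [hsub.2]
    · rw [← mul_add, abs_of_nonneg (by positivity : 0 ≤ C * r * (‖z‖ + ‖η‖)), abs_of_nonneg hsum]
      linarith [hadd.2]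

end Collinear

theorem comparable_rpow_of_le_of_le_mul {x y l : ℝ} (s : ℝ) (hx : 0 < x) (hxy : x ≤ y)
    (hyx : y ≤ l * x) : Comparable (l ^ |s|) (y ^ s) (x ^ s) := by
  have hl : 1 ≤ l := le_of_mul_le_mul_right (by linarith) hx
  have hl₀ : 0 < l := by linarith
  have hy : 0 < y := hx.trans_le hxy
  have hlx : (l * x) ^ s = l ^ s * x ^ s := mul_rpow hl₀.le hx.le
  rcases le_total 0 s with hs | hs
  · rw [abs_of_nonneg hs]
    have hls : 1 ≤ l ^ s := one_le_rpow hl hs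
    have hyl := rpow_le_rpow hy.le hyx hs
    have hxy' := rpow_le_rpow hx.le hxy hs
    constructor
    · rw [inv_mul_le_iff₀ (by positivity)]
      linarith
    · nlinarith [rpow_nonneg hy.le s]
  · rw [abs_of_nonpos hs]
    have hls : 1 ≤ l ^ (-s) := one_le_rpow hl (by linarith)
    have hyl := rpow_le_rpow_of_nonpos hy hyx hs
    have hxy' := rpow_le_rpow_of_nonpos hx hxy hs
    have hinv : l ^ (-s) * l ^ s = 1 := by rw [← rpow_add hl₀, neg_add_cancel, rpow_zero]
    constructor
    · nlinarith [inv_le_one_of_one_le₀ hls, rpow_nonneg hy.le s]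
    · nlinarith [rpow_nonneg hx.le s]

section Profile

variable {s a b : ℝ}

theorem hasDerivAt_one_add_sq_rpow_mul (s x : ℝ) :
    HasDerivAt (fun x : ℝ => (1 + x ^ 2) ^ s * x)
      ((1 + 2 * s) * (1 + x ^ 2) ^ s - 2 * s * (1 + x ^ 2) ^ (s - 1)) x := by
  have hpos : 0 < 1 + x ^ 2 := by positivity
  refine ((((hasDerivAt_pow 2 x).const_add 1).rpow_const (p := s) (Or.inl hpos.ne')).mul
    (hasDerivAt_id x)).congr_deriv ?_
  rw [show (1 + x ^ 2) ^ s = (1 + x ^ 2) ^ (s - 1) * (1 + x ^ 2) by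
    rw [← rpow_add_one hpos.ne', sub_add_cancel]]
  simp only [Nat.cast_ofNat, id_eq]
  ring

theorem one_add_sq_rpow_le_of_le (hs : 0 ≤ s) (ha : 0 ≤ a) (hab : a ≤ b) :
    (1 + a ^ 2) ^ s ≤ (1 + b ^ 2) ^ s :=
  rpow_le_rpow (by positivity) (by nlinarith) hs

theorem one_add_sq_rpow_le_of_le_of_nonpos (hs : s ≤ 0) (ha : 0 ≤ a) (hab : a ≤ b) :
    (1 + b ^ 2) ^ s ≤ (1 + a ^ 2) ^ s :=
  rpow_le_rpow_of_nonpos (by positivity) (by nlinarith) hs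

theorem one_add_sq_rpow_mul_sub_le (hs : 0 ≤ s) (ha : 0 ≤ a) (hab : a ≤ b) :
    (1 + b ^ 2) ^ s * b - (1 + a ^ 2) ^ s * a ≤ (1 + 2 * s) * ((b - a) * (1 + b ^ 2) ^ s) := by
  have hderiv (x : ℝ) := hasDerivAt_one_add_sq_rpow_mul s x
  have h := (convex_Icc a b).image_sub_le_mul_sub_of_deriv_le
    (fun x _ => (hderiv x).continuousAt.continuousWithinAt)
    (fun x _ => (hderiv x).differentiableAt.differentiableWithinAt)
    (C := (1 + 2 * s) * (1 + b ^ 2) ^ s) ?_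
    a (Set.left_mem_Icc.2 hab) b (Set.right_mem_Icc.2 hab) hab
  · linarith
  rw [interior_Icc]
  rintro x ⟨hax, hxb⟩
  rw [(hderiv x).deriv]
  have := one_add_sq_rpow_le_of_le hs (ha.trans hax.le) hxb.le
  have : 0 ≤ 2 * s * (1 + x ^ 2) ^ (s - 1) := by positivity
  nlinarith

theorem le_one_add_sq_rpow_mul_sub (hs : s ≤ 0) (hs' : 0 ≤ 1 + 2 * s) (ha : 0 ≤ a) (hab : a ≤ b) :
    (1 + 2 * s) * ((b - a) * (1 + b ^ 2) ^ s) ≤ (1 + b ^ 2) ^ s * b - (1 + a ^ 2) ^ s * a := by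
  have hderiv (x : ℝ) := hasDerivAt_one_add_sq_rpow_mul s x
  have h := (convex_Icc a b).mul_sub_le_image_sub_of_le_deriv
    (fun x _ => (hderiv x).continuousAt.continuousWithinAt)
    (fun x _ => (hderiv x).differentiableAt.differentiableWithinAt)
    (C := (1 + 2 * s) * (1 + b ^ 2) ^ s) ?_
    a (Set.left_mem_Icc.2 hab) b (Set.right_mem_Icc.2 hab) hab
  · linarith
  rw [interior_Icc]
  rintro x ⟨hax, hxb⟩
  rw [(hderiv x).deriv]
  have := one_add_sq_rpow_le_of_le_of_nonpos hs (ha.trans hax.le) hxb.le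
  have : 0 ≤ (1 + x ^ 2) ^ (s - 1) := by positivity
  nlinarith

theorem comparable_one_add_sq_rpow_mul_sub (hs : 0 < 1 + 2 * s) (ha : 0 ≤ a) (hab : a ≤ b) :
    Comparable (max (1 + 2 * s) (1 + 2 * s)⁻¹) ((b - a) * (1 + b ^ 2) ^ s)
      ((1 + b ^ 2) ^ s * b - (1 + a ^ 2) ^ s * a) := by
  have hX : 0 ≤ (b - a) * (1 + b ^ 2) ^ s := mul_nonneg (sub_nonneg.2 hab) (by positivity)
  rcases le_total 0 s with hs₀ | hs₀
  · have hC : 1 ≤ max (1 + 2 * s) (1 + 2 * s)⁻¹ := le_max_of_le_left (by linarith)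
    have := mul_le_mul_of_nonneg_right (one_add_sq_rpow_le_of_le hs₀ ha hab) ha
    constructor
    · nlinarith [inv_le_one_of_one_le₀ hC]
    · nlinarith [one_add_sq_rpow_mul_sub_le hs₀ ha hab, le_max_left (1 + 2 * s) (1 + 2 * s)⁻¹]
  · have hC : 1 ≤ max (1 + 2 * s) (1 + 2 * s)⁻¹ :=
      le_max_of_le_right ((one_le_inv₀ hs).2 (by linarith))
    have hC' : (max (1 + 2 * s) (1 + 2 * s)⁻¹)⁻¹ ≤ 1 + 2 * s := by
      simpa using inv_anti₀ (inv_pos.2 hs) (le_max_right (1 + 2 * s) (1 + 2 * s)⁻¹)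
    have := mul_le_mul_of_nonneg_right (one_add_sq_rpow_le_of_le_of_nonpos hs₀ ha hab) ha
    constructor
    · nlinarith [le_one_add_sq_rpow_mul_sub hs₀ hs.le ha hab]
    · nlinarith

theorem comparable_one_add_sq_rpow_mul_add (hs : 0 < 1 + 2 * s) (ha : 0 ≤ a) (hab : a ≤ b) :
    Comparable 2 ((a + b) * (1 + b ^ 2) ^ s) ((1 + a ^ 2) ^ s * a + (1 + b ^ 2) ^ s * b) := by
  have hmono : (1 + a ^ 2) ^ s * a ≤ (1 + b ^ 2) ^ s * b := by
    have := (comparable_one_add_sq_rpow_mul_sub hs ha hab).nonneg (by positivity)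
      (mul_nonneg (sub_nonneg.2 hab) (by positivity))
    linarith
  have hA : 0 ≤ (1 + a ^ 2) ^ s * a := by positivity
  have hB : 0 ≤ (1 + b ^ 2) ^ s := by positivity
  constructor <;> nlinarith [mul_le_mul_of_nonneg_right hab hB]

theorem comparable_one_add_sq_rpow_mul_sub_add (hs : 0 < 1 + 2 * s) (ha : 0 ≤ a) (hb : 0 ≤ b) :
    Comparable (2 ^ |s| * max 2 (max (1 + 2 * s) (1 + 2 * s)⁻¹))
        (|a - b| * (1 + a ^ 2 + b ^ 2) ^ s) |(1 + a ^ 2) ^ s * a - (1 + b ^ 2) ^ s * b| ∧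
      Comparable (2 ^ |s| * max 2 (max (1 + 2 * s) (1 + 2 * s)⁻¹))
        ((a + b) * (1 + a ^ 2 + b ^ 2) ^ s) ((1 + a ^ 2) ^ s * a + (1 + b ^ 2) ^ s * b) := by
  wlog hab : a ≤ b generalizing a b
  · have h := this hb ha (le_of_not_ge hab)
    rwa [abs_sub_comm, abs_sub_comm ((1 + b ^ 2) ^ s * b), add_comm b,
      add_comm ((1 + b ^ 2) ^ s * b), add_right_comm] at h
  have h2s : (0 : ℝ) ≤ 2 ^ |s| := by positivity
  have hw : Comparable (2 ^ |s|) ((1 + a ^ 2 + b ^ 2) ^ s) ((1 + b ^ 2) ^ s) :=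
    comparable_rpow_of_le_of_le_mul s (by positivity) (by nlinarith) (by nlinarith)
  have hsub := (hw.mul_left (sub_nonneg.2 hab)).trans (by positivity)
    (comparable_one_add_sq_rpow_mul_sub hs ha hab)
  have hadd := (hw.mul_left (add_nonneg ha hb)).trans zero_le_two
    (comparable_one_add_sq_rpow_mul_add hs ha hab)
  have hY : 0 ≤ (1 + b ^ 2) ^ s * b - (1 + a ^ 2) ^ s * a :=
    hsub.nonneg (by positivity) (mul_nonneg (sub_nonneg.2 hab) (by positivity))
  rw [abs_sub_comm, abs_of_nonneg (sub_nonneg.2 hab), abs_sub_comm, abs_of_nonneg hY]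
  exact ⟨hsub.mono (by positivity) (mul_le_mul_of_nonneg_left (le_max_right _ _) h2s)
      (mul_nonneg (sub_nonneg.2 hab) (by positivity)),
    hadd.mono (by positivity) (mul_le_mul_of_nonneg_left (le_max_left _ _) h2s) (by positivity)⟩
end Profile

theorem comparable_norm_Vp_sub_Vp {E : Type*} [NormedAddCommGroup E] [InnerProductSpace ℝ E]
    {p : ℝ} (hp : 0 < p) (z η : E) :
    Comparable (2 ^ |(p - 2) / 4| * max 2 (max (p / 2) (2 / p)))
      (‖z - η‖ * (1 + ‖z‖ ^ 2 + ‖η‖ ^ 2) ^ ((p - 2) / 4)) ‖Vp p z - Vp p η‖ := by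
  have hp2 : 1 + 2 * ((p - 2) / 4) = p / 2 := by ring
  obtain ⟨hsub, hadd⟩ := comparable_one_add_sq_rpow_mul_sub_add (s := (p - 2) / 4) (by linarith)
    (norm_nonneg z) (norm_nonneg η)
  rw [hp2, inv_div] at hsub hadd
  exact hsub.norm_smul_sub_smul z η (by positivity) (by positivity) hadd

theorem stmt_2_general (k : ℕ) (γ₁ γ₂ : ℝ) (hγ₁ : 1 < γ₁) (hγ : γ₁ ≤ γ₂) :
    ∃ c : ℝ, 1 ≤ c ∧ ∀ p : ℝ, γ₁ ≤ p → p ≤ γ₂ →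
      ∀ z η : EuclideanSpace ℝ (Fin k),
        c⁻¹ * ‖z - η‖ * (1 + ‖z‖ ^ 2 + ‖η‖ ^ 2) ^ ((p - 2) / 4) ≤ ‖Vp p z - Vp p η‖ ∧
        ‖Vp p z - Vp p η‖ ≤ c * ‖z - η‖ * (1 + ‖z‖ ^ 2 + ‖η‖ ^ 2) ^ ((p - 2) / 4) := by
  refine ⟨2 ^ (γ₂ / 4) * (2 + γ₂), ?_, fun p hp₁ hp₂ z η => ?_⟩
  · nlinarith [one_le_rpow (show (1 : ℝ) ≤ 2 by norm_num) (show 0 ≤ γ₂ / 4 by linarith)]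
  have hp : 1 < p := hγ₁.trans_le hp₁
  have hexp : 2 ^ |(p - 2) / 4| ≤ (2 : ℝ) ^ (γ₂ / 4) :=
    rpow_le_rpow_of_exponent_le one_le_two (abs_le.2 ⟨by linarith, by linarith⟩)
  have hmax : max 2 (max (p / 2) (2 / p)) ≤ 2 + γ₂ :=
    max_le (by linarith) (max_le (by linarith) ((div_le_iff₀ (by linarith)).2 (by nlinarith)))
  have h := (comparable_norm_Vp_sub_Vp (by linarith) z η).mono (by positivity)
    (mul_le_mul hexp hmax (by positivity) (by positivity)) (by positivity)
  rwa [Comparable, ← mul_assoc, ← mul_assoc] at h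

theorem stmt_2 (k : ℕ) (hk : 1 ≤ k) (γ₁ γ₂ : ℝ) (hγ₁ : 1 < γ₁) (hγ : γ₁ ≤ γ₂) :
    ∃ c : ℝ, 1 ≤ c ∧ ∀ p : ℝ, γ₁ ≤ p → p ≤ γ₂ →
      ∀ z η : EuclideanSpace ℝ (Fin k),
        c⁻¹ * ‖z - η‖ * (1 + ‖z‖ ^ 2 + ‖η‖ ^ 2) ^ ((p - 2) / 4) ≤ ‖Vp p z - Vp p η‖ ∧
        ‖Vp p z - Vp p η‖ ≤ c * ‖z - η‖ * (1 + ‖z‖ ^ 2 + ‖η‖ ^ 2) ^ ((p - 2) / 4) :=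
  stmt_2_general k γ₁ γ₂ hγ₁ hγ
end

section
/- Let k ≥ 1 and p ≥ 2. There exists a constant c = c(k,p) > 0 such that for all z, η ∈ ℝ^k one has |z − η|^{p/2} ≤ c |V_p(z) − V_p(η)|; equivalently, the inverse of V_p is globally Hölder continuous with exponent 2/p. -/
open scoped RealInnerProductSpace

set_option maxHeartbeats 1600000 in
theorem stmt_9 (k : ℕ) (hk : 1 ≤ k) (p : ℝ) (hp : 2 ≤ p) :
    ∃ c : ℝ, 0 < c ∧ ∀ z η : EuclideanSpace ℝ (Fin k),
      ‖z - η‖ ^ (p / 2) ≤ c * ‖Vp p z - Vp p η‖ := by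
  have he : (0:ℝ) ≤ (p - 2) / 4 := by linarith
  refine ⟨2 * (4:ℝ) ^ ((p - 2) / 4), by positivity, ?_⟩
  intro z η
  set e : ℝ := (p - 2) / 4 with he_def
  set a := ‖z‖ with ha_def
  set b := ‖η‖ with hb_def
  set d := ‖z - η‖ with hd_def
  have ha : 0 ≤ a := norm_nonneg _
  have hb : 0 ≤ b := norm_nonneg _
  have hd0 : 0 ≤ d := norm_nonneg _
  set A : ℝ := (1 + a ^ 2) ^ e with hA_def
  set B : ℝ := (1 + b ^ 2) ^ e with hB_def
  have hApos : 0 < A := Real.rpow_pos_of_pos (by positivity) _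
  have hBpos : 0 < B := Real.rpow_pos_of_pos (by positivity) _
  have hV : Vp p z - Vp p η = A • z - B • η := by
    simp only [Vp, hA_def, hB_def, he_def, ha_def, hb_def]
  clear_value e a b d A B
  have hinner : ⟪Vp p z - Vp p η, z - η⟫
      = A * a ^ 2 + B * b ^ 2 - (A + B) * ⟪z, η⟫ := by
    rw [hV]
    simp only [inner_sub_left, inner_sub_right, real_inner_smul_left,
      real_inner_self_eq_norm_sq, real_inner_comm η z, ha_def, hb_def]
    ring
  have ht : ⟪z, η⟫ = (a ^ 2 + b ^ 2 - d ^ 2) / 2 := by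
    have h := norm_sub_sq_real z η
    rw [← ha_def, ← hb_def, ← hd_def] at h
    linarith
  have hmono : 0 ≤ (A - B) * (a ^ 2 - b ^ 2) := by
    rcases le_total a b with h | h
    · have h2 : a ^ 2 ≤ b ^ 2 := by nlinarith
      have hAB : A ≤ B := by
        rw [hA_def, hB_def]
        exact Real.rpow_le_rpow (by positivity) (by linarith) he
      nlinarith [mul_nonneg (sub_nonneg.2 hAB) (sub_nonneg.2 h2)]
    · have h2 : b ^ 2 ≤ a ^ 2 := by nlinarith
      have hAB : B ≤ A := by
        rw [hA_def, hB_def]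
        exact Real.rpow_le_rpow (by positivity) (by linarith) he
      nlinarith [mul_nonneg (sub_nonneg.2 hAB) (sub_nonneg.2 h2)]
  have hlow : (A + B) / 2 * d ^ 2 ≤ ⟪Vp p z - Vp p η, z - η⟫ := by
    rw [hinner, ht]; nlinarith
  have hCS : ⟪Vp p z - Vp p η, z - η⟫ ≤ ‖Vp p z - Vp p η‖ * d := by
    rw [hd_def]; exact real_inner_le_norm _ _
  rcases eq_or_lt_of_le hd0 with hd | hd
  · rw [← hd, Real.zero_rpow (by positivity : p / 2 ≠ 0)]
    positivity
  · have hN : (A + B) / 2 * d ≤ ‖Vp p z - Vp p η‖ := by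
      have h1 : (A + B) / 2 * d * d ≤ ‖Vp p z - Vp p η‖ * d :=
        calc (A + B) / 2 * d * d = (A + B) / 2 * d ^ 2 := by ring
          _ ≤ _ := hlow.trans hCS
      exact le_of_mul_le_mul_right h1 hd
    have hab : d ≤ a + b := by
      rw [hd_def, ha_def, hb_def]; exact norm_sub_le z η
    clear hinner ht hV hlow hCS hmono hd_def ha_def hb_def
    have hmax : d ^ 2 ≤ 4 * max (1 + a ^ 2) (1 + b ^ 2) := by
      rcases max_cases (1 + a ^ 2) (1 + b ^ 2) with ⟨hm, h2⟩ | ⟨hm, h2⟩ <;>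
        rw [hm] <;> nlinarith [sq_nonneg (a - b), sq_nonneg (a + b), hd0, hab]
    have hd2 : d ^ ((p - 2) / 2) ≤ 4 ^ e * (A + B) := by
      have h0 : d ^ ((p - 2) / 2) = ((d ^ 2 : ℝ)) ^ e := by
        rw [← Real.rpow_natCast d 2, ← Real.rpow_mul hd0]
        congr 1
        rw [he_def]
        push_cast
        ring
      rw [h0]
      have h1 : ((d ^ 2 : ℝ)) ^ e ≤ (4 * max (1 + a ^ 2) (1 + b ^ 2)) ^ e :=
        Real.rpow_le_rpow (by positivity) hmax he
      have h2 : (4 * max (1 + a ^ 2) (1 + b ^ 2)) ^ e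
          = 4 ^ e * (max (1 + a ^ 2) (1 + b ^ 2)) ^ e :=
        Real.mul_rpow (by norm_num) (le_trans (by positivity) (le_max_left _ _))
      have h3 : (max (1 + a ^ 2) (1 + b ^ 2)) ^ e ≤ A + B := by
        rcases max_cases (1 + a ^ 2) (1 + b ^ 2) with ⟨hm, _⟩ | ⟨hm, _⟩
        · rw [hm, ← hA_def]; linarith
        · rw [hm, ← hB_def]; linarith
      calc ((d ^ 2 : ℝ)) ^ e ≤ 4 ^ e * (max (1 + a ^ 2) (1 + b ^ 2)) ^ e := by
            rw [← h2]; exact h1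
        _ ≤ 4 ^ e * (A + B) :=
            mul_le_mul_of_nonneg_left h3
              (le_of_lt (Real.rpow_pos_of_pos (by norm_num) _))
    have hsplit : d ^ (p / 2) = d ^ ((p - 2) / 2) * d := by
      conv_lhs => rw [show p / 2 = (p - 2) / 2 + 1 by ring]
      rw [Real.rpow_add hd, Real.rpow_one]
    rw [hsplit]
    calc d ^ ((p - 2) / 2) * d ≤ 4 ^ e * (A + B) * d :=
          mul_le_mul_of_nonneg_right hd2 hd0
      _ = 2 * 4 ^ e * ((A + B) / 2 * d) := by ring
      _ ≤ 2 * 4 ^ e * ‖Vp p z - Vp p η‖ :=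
          mul_le_mul_of_nonneg_left hN
            (by positivity)
end
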